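/- arXiv:1602.03025 — 6 statements merged into one kernel-verified Lean document; each statement's English description precedes it below -/
import Mathlib

section
/- For every x ∈ R/Z and every integer n ≥ 2, ζ̂(x,n) + (-1)^n ζ̂(-x,n) = -(2πi)^n/n! · B_n({x}), where B_n is the n-th Bernoulli polynomial and {x} the fractional part. -/
/-!
Splitting `expZeta = cosZeta + I * sinZeta` into its even and odd parts in `a`, the left-hand
side is `2 cosZeta` for even `n` and `2 I sinZeta` for odd `n`; on `[0, 1]` these are the
classical Fourier series of the Bernoulli polynomials (`cosZeta_two_mul_nat`,
`sinZeta_two_mul_nat_add_one`). Since the left-hand side only depends on `x` modulo `1`, we may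
take `x = {x} ∈ [0, 1)`.
-/

set_option autoImplicit false

open Complex HurwitzZeta Real

namespace HurwitzZeta

lemma expZeta_add_expZeta_neg (a : UnitAddCircle) (s : ℂ) :
    expZeta a s + expZeta (-a) s = 2 * cosZeta a s := by
  rw [expZeta, expZeta, cosZeta_neg, sinZeta_neg]
  ring

lemma expZeta_sub_expZeta_neg (a : UnitAddCircle) (s : ℂ) :
    expZeta a s - expZeta (-a) s = 2 * I * sinZeta a s := by
  rw [expZeta, expZeta, cosZeta_neg, sinZeta_neg]
  ring

variable {x : ℝ} {k : ℕ}

lemma two_mul_cosZeta_two_mul_nat (hk : k ≠ 0) (hx : x ∈ Set.Icc 0 1) :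
    2 * cosZeta x (2 * k) = -(2 * π * I) ^ (2 * k) / (2 * k).factorial *
      Polynomial.aeval (x : ℂ) (Polynomial.bernoulli (2 * k)) := by
  rw [cosZeta_two_mul_nat hk hx, Polynomial.aeval_def, Polynomial.eval₂_eq_eval_map,
    mul_pow _ I, pow_mul I, I_sq]
  ring

lemma two_mul_I_mul_sinZeta_two_mul_nat_add_one (hk : k ≠ 0) (hx : x ∈ Set.Icc 0 1) :
    2 * I * sinZeta x (2 * k + 1) = -(2 * π * I) ^ (2 * k + 1) / (2 * k + 1).factorial *
      Polynomial.aeval (x : ℂ) (Polynomial.bernoulli (2 * k + 1)) := by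
  rw [sinZeta_two_mul_nat_add_one hk hx, Polynomial.aeval_def, Polynomial.eval₂_eq_eval_map,
    mul_pow _ I, pow_succ I, pow_mul I, I_sq]
  ring

lemma expZeta_add_neg_one_pow_mul_expZeta_neg_of_mem_Icc {n : ℕ} (hn : 2 ≤ n)
    (hx : x ∈ Set.Icc 0 1) :
    expZeta x n + (-1 : ℂ) ^ n * expZeta (-x : UnitAddCircle) n =
      -(2 * π * I) ^ n / n.factorial * Polynomial.aeval (x : ℂ) (Polynomial.bernoulli n) := by
  obtain ⟨k, rfl | rfl⟩ := Nat.even_or_odd' n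
  · rw [pow_mul, neg_one_sq, one_pow, one_mul, expZeta_add_expZeta_neg]
    exact_mod_cast two_mul_cosZeta_two_mul_nat (by omega) hx
  · rw [pow_succ, pow_mul, neg_one_sq, one_pow, one_mul, neg_one_mul, ← sub_eq_add_neg,
      expZeta_sub_expZeta_neg]
    exact_mod_cast two_mul_I_mul_sinZeta_two_mul_nat_add_one (by omega) hx

end HurwitzZeta

/-- For every `x ∈ ℝ/ℤ` and every integer `n ≥ 2`,
`ζ̂(x,n) + (-1)^n ζ̂(-x,n) = -(2πi)^n/n! · B_n({x})`. -/
theorem expZeta_add_neg_eq_bernoulli (x : ℝ) (n : ℕ) (hn : 2 ≤ n) :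
    expZeta (x : UnitAddCircle) n + (-1 : ℂ) ^ n * expZeta ((-x : ℝ) : UnitAddCircle) n =
      -(2 * π * I) ^ n / (n.factorial : ℂ) *
        Polynomial.aeval ((Int.fract x : ℝ) : ℂ) (Polynomial.bernoulli n) := by
  rw [AddCircle.coe_neg, ← AddCircle.coe_fract x]
  exact expZeta_add_neg_one_pow_mul_expZeta_neg_of_mem_Icc hn
    ⟨Int.fract_nonneg x, (Int.fract_lt_one x).le⟩
end

section
/- For every integer k ∈ Z there exist constants C > 0 and μ, ν ≥ 0 such that for all real numbers a, b ≥ 1, ∫_0^∞ e^{-ay - b/y} y^{k-1} dy ≤ C a^μ b^ν e^{-√(ab)}. -/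
set_option autoImplicit false

open MeasureTheory Real

/-!
For `a, b ≥ 1` and `y > 0`, AM-GM gives `a y + b / y ≥ 2 √(ab)` and trivially
`a y + b / y ≥ y + 1 / y`; averaging, `a y + b / y ≥ √(ab) + (y + 1 / y) / 2`. Hence the
integral is at most `e^{-√(ab)}` times the `(a, b)`-independent integral
`∫_0^∞ e^{-(y + 1/y)/2} y^{k-1} dy`, which is finite because the factor `e^{-1/(2y)}` kills any
power of `y` at `0` and `e^{-y/4}` any power at `∞`. So one can take `μ = ν = 0`.
-/

theorem pow_mul_exp_neg_mul_le (n : ℕ) {c y : ℝ} (hc : 0 < c) (hy : 0 ≤ y) :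
    y ^ n * exp (-(c * y)) ≤ n.factorial / c ^ n := by
  have h := pow_div_factorial_le_exp (x := c * y) (mul_nonneg hc.le hy) n
  rw [div_le_iff₀ (by positivity), mul_pow] at h
  rw [le_div_iff₀ (by positivity), exp_neg]
  calc y ^ n * (exp (c * y))⁻¹ * c ^ n = (c ^ n * y ^ n) * (exp (c * y))⁻¹ := by ring
    _ ≤ (exp (c * y) * n.factorial) * (exp (c * y))⁻¹ := by gcongr
    _ = n.factorial := by field_simp

theorem zpow_le_pow_natAbs_add_inv_pow_natAbs (m : ℤ) {y : ℝ} (hy : 0 < y) :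
    y ^ m ≤ y ^ m.natAbs + y⁻¹ ^ m.natAbs := by
  have hpow : 0 ≤ y ^ m.natAbs := by positivity
  have hpow_inv : 0 ≤ y⁻¹ ^ m.natAbs := by positivity
  rcases le_total 1 y with h1 | h1
  · calc y ^ m ≤ y ^ (m.natAbs : ℤ) := zpow_le_zpow_right₀ h1 Int.le_natAbs
      _ = y ^ m.natAbs := zpow_natCast y _
      _ ≤ _ := by linarith
  · calc y ^ m = y⁻¹ ^ (-m) := by rw [inv_zpow', neg_neg]
      _ ≤ y⁻¹ ^ (m.natAbs : ℤ) := zpow_le_zpow_right₀ (one_le_inv₀ hy |>.2 h1) (by omega)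
      _ = y⁻¹ ^ m.natAbs := zpow_natCast _ _
      _ ≤ _ := by linarith

theorem sqrt_mul_add_half_add_inv_le {a b y : ℝ} (ha : 1 ≤ a) (hb : 1 ≤ b) (hy : 0 < y) :
    √(a * b) + (y + y⁻¹) / 2 ≤ a * y + b / y := by
  have hprod : (a * y) * (b / y) = a * b := by field_simp
  have amgm : √(a * b) ≤ (a * y + b / y) / 2 := by
    rw [sqrt_le_iff]
    constructor
    · positivity
    · nlinarith [sq_nonneg (a * y - b / y)]
  have : y + y⁻¹ ≤ a * y + b / y := by
    rw [← one_div]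
    gcongr
    · exact le_mul_of_one_le_left hy.le ha
  linarith

theorem exists_exp_neg_add_inv_mul_zpow_le (m : ℤ) :
    ∃ C, ∀ y > 0, exp (-(y + y⁻¹) / 2) * y ^ m ≤ C * exp (-(1 / 4) * y) := by
  set n := m.natAbs
  refine ⟨n.factorial / (1 / 4) ^ n + n.factorial / (1 / 2) ^ n, fun y hy => ?_⟩
  have hsplit : exp (-(y + y⁻¹) / 2) =
      exp (-(1 / 4) * y) * exp (-(1 / 4 * y)) * exp (-(1 / 2 * y⁻¹)) := by
    rw [← exp_add, ← exp_add]; ring_nf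
  have hbig : y ^ n * exp (-(1 / 4 * y)) ≤ n.factorial / (1 / 4) ^ n :=
    pow_mul_exp_neg_mul_le n (by norm_num) hy.le
  have hsmall : y⁻¹ ^ n * exp (-(1 / 2 * y⁻¹)) ≤ n.factorial / (1 / 2) ^ n :=
    pow_mul_exp_neg_mul_le n (by norm_num) (inv_nonneg.2 hy.le)
  have h1 : exp (-(1 / 4 * y)) ≤ 1 := exp_le_one_iff.2 (by nlinarith)
  have h2 : exp (-(1 / 2 * y⁻¹)) ≤ 1 := exp_le_one_iff.2 (by have := inv_pos.2 hy; nlinarith)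
  calc exp (-(y + y⁻¹) / 2) * y ^ m ≤ exp (-(y + y⁻¹) / 2) * (y ^ n + y⁻¹ ^ n) := by
        gcongr; exact zpow_le_pow_natAbs_add_inv_pow_natAbs m hy
    _ = exp (-(1 / 4) * y) * (exp (-(1 / 2 * y⁻¹)) * (y ^ n * exp (-(1 / 4 * y)))
          + exp (-(1 / 4 * y)) * (y⁻¹ ^ n * exp (-(1 / 2 * y⁻¹)))) := by rw [hsplit]; ring
    _ ≤ exp (-(1 / 4) * y) *
          (1 * (n.factorial / (1 / 4) ^ n) + 1 * (n.factorial / (1 / 2) ^ n)) := by gcongr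
    _ = _ := by ring

theorem integrableOn_exp_neg_add_inv_mul_zpow (m : ℤ) :
    IntegrableOn (fun y : ℝ => exp (-(y + y⁻¹) / 2) * y ^ m) (Set.Ioi 0) := by
  obtain ⟨C, hC⟩ := exists_exp_neg_add_inv_mul_zpow_le m
  refine Integrable.mono'
    ((exp_neg_integrableOn_Ioi 0 (by norm_num : (0 : ℝ) < 1 / 4)).const_mul C)
    (by fun_prop : Measurable _).aestronglyMeasurable ?_
  filter_upwards [ae_restrict_mem measurableSet_Ioi] with y (hy : 0 < y)
  rw [norm_of_nonneg (by positivity)]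
  exact hC y hy

theorem setIntegral_exp_neg_mul_sub_div_mul_zpow_le {a b : ℝ} (ha : 1 ≤ a) (hb : 1 ≤ b)
    (m : ℤ) :
    ∫ y in Set.Ioi (0 : ℝ), exp (-a * y - b / y) * y ^ m ≤
      exp (-√(a * b)) * ∫ y in Set.Ioi (0 : ℝ), exp (-(y + y⁻¹) / 2) * y ^ m := by
  rw [← integral_const_mul]
  refine integral_mono_of_nonneg ?_ ((integrableOn_exp_neg_add_inv_mul_zpow m).const_mul _) ?_
  all_goals filter_upwards [ae_restrict_mem measurableSet_Ioi] with y (hy : 0 < y)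
  · positivity
  · rw [← mul_assoc, ← exp_add]
    gcongr
    linarith [sqrt_mul_add_half_add_inv_le ha hb hy]

/-- For every `k ∈ ℤ` there exist `C > 0` and `μ, ν ≥ 0` such that for all `a, b ≥ 1`,
`∫_0^∞ e^{-ay - b/y} y^{k-1} dy ≤ C a^μ b^ν e^{-√(ab)}`. -/
theorem bessel_type_integral_bound (k : ℤ) :
    ∃ C : ℝ, 0 < C ∧ ∃ μ ν : ℝ, 0 ≤ μ ∧ 0 ≤ ν ∧
      ∀ a b : ℝ, 1 ≤ a → 1 ≤ b →
        ∫ y in Set.Ioi (0 : ℝ), Real.exp (-a * y - b / y) * y ^ (k - 1) ≤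
          C * a ^ μ * b ^ ν * Real.exp (-Real.sqrt (a * b)) := by
  set I := ∫ y in Set.Ioi (0 : ℝ), exp (-(y + y⁻¹) / 2) * y ^ (k - 1)
  have hI : 0 ≤ I := setIntegral_nonneg measurableSet_Ioi fun y (hy : 0 < y) => by positivity
  refine ⟨I + 1, by linarith, 0, 0, le_rfl, le_rfl, fun a b ha hb => ?_⟩
  calc _ ≤ exp (-√(a * b)) * I := setIntegral_exp_neg_mul_sub_div_mul_zpow_le ha hb (k - 1)
    _ ≤ (I + 1) * a ^ (0 : ℝ) * b ^ (0 : ℝ) * exp (-√(a * b)) := by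
      rw [rpow_zero, rpow_zero, mul_one, mul_one, mul_comm]
      gcongr
      linarith
end

section
/- For all real a, b ≥ 1 and every integer k ≤ 1, ∫_{√(b/a)}^∞ e^{-ay - b/y} y^{k-1} dy ≤ a^{-k} (ab)^{(k-1)/2} e^{-√(ab)}. -/
set_option autoImplicit false

open MeasureTheory Real

/-!
On `(s, ∞)` with `s > 0` we have `e^{-b/y} ≤ 1` and, as `k - 1 ≤ 0`, `y^{k-1} ≤ s^{k-1}`; hence the
integral is at most `s^{k-1} ∫_s^∞ e^{-ay} dy = s^{k-1} e^{-as} / a`. At `s = √(b/a)` one has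
`a s = √(ab)` and `s^{k-1} / a = a^{-k} (ab)^{(k-1)/2}`.
-/

lemma zpow_le_zpow_left_of_nonpos₀ {n : ℤ} (hn : n ≤ 0) {x y : ℝ} (hx : 0 < x) (hxy : x ≤ y) :
    y ^ n ≤ x ^ n := by
  simpa only [zpow_neg, inv_inv] using
    inv_anti₀ (zpow_pos hx (-n)) (zpow_le_zpow_left₀ (neg_nonneg.mpr hn) hx.le hxy)

lemma Real.sqrt_zpow {x : ℝ} (hx : 0 ≤ x) (n : ℤ) : √x ^ n = x ^ ((n : ℝ) / 2) := by
  rw [sqrt_eq_rpow, ← rpow_intCast, ← rpow_mul hx, one_div_mul_eq_div]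

lemma Real.sqrt_div_eq_sqrt_mul_div {a : ℝ} (ha : 0 < a) (b : ℝ) : √(b / a) = √(a * b) / a := by
  rw [eq_div_iff ha.ne', show a * b = b / a * a ^ 2 by field_simp, sqrt_mul' _ (sq_nonneg a),
    sqrt_sq ha.le]

lemma exp_neg_mul_sub_div_mul_zpow_le {a b s y : ℝ} {n : ℤ} (hb : 0 ≤ b) (hn : n ≤ 0)
    (hs : 0 < s) (hy : s ≤ y) :
    exp (-a * y - b / y) * y ^ n ≤ s ^ n * exp (-a * y) := by
  have hy0 : 0 < y := hs.trans_le hy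
  rw [mul_comm]
  gcongr
  · exact zpow_le_zpow_left_of_nonpos₀ hn hs hy
  · linarith [div_nonneg hb hy0.le]

lemma integral_exp_neg_mul_Ioi {a : ℝ} (ha : 0 < a) (s : ℝ) :
    ∫ y in Set.Ioi s, exp (-a * y) = exp (-a * s) / a := by
  rw [integral_exp_mul_Ioi (neg_lt_zero.mpr ha), neg_div_neg_eq]

lemma integral_exp_neg_mul_sub_div_mul_zpow_Ioi_le {a b s : ℝ} {n : ℤ} (ha : 0 < a) (hb : 0 ≤ b)
    (hn : n ≤ 0) (hs : 0 < s) :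
    ∫ y in Set.Ioi s, exp (-a * y - b / y) * y ^ n ≤ s ^ n * exp (-a * s) / a := by
  have hbound : ∀ y ∈ Set.Ioi s, exp (-a * y - b / y) * y ^ n ≤ s ^ n * exp (-a * y) :=
    fun y hy ↦ exp_neg_mul_sub_div_mul_zpow_le hb hn hs hy.le
  have hg : IntegrableOn (fun y ↦ s ^ n * exp (-a * y)) (Set.Ioi s) :=
    (integrableOn_exp_mul_Ioi (neg_lt_zero.mpr ha) s).const_mul _
  have hcont : ContinuousOn (fun y ↦ exp (-a * y - b / y) * y ^ n) (Set.Ioi s) := by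
    have hne : ∀ y ∈ Set.Ioi s, y ≠ 0 := fun y hy ↦ (hs.trans hy).ne'
    exact ((continuousOn_const.mul continuousOn_id).sub
      (continuousOn_const.div continuousOn_id hne)).rexp.mul
      (continuousOn_id.zpow₀ n fun y hy ↦ Or.inl (hne y hy))
  have hf : IntegrableOn (fun y ↦ exp (-a * y - b / y) * y ^ n) (Set.Ioi s) := by
    refine hg.mono' (hcont.aestronglyMeasurable measurableSet_Ioi) ?_
    filter_upwards [ae_restrict_mem measurableSet_Ioi] with y hy
    rw [norm_of_nonneg (by have := hs.trans hy; positivity)]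
    exact hbound y hy
  calc ∫ y in Set.Ioi s, exp (-a * y - b / y) * y ^ n
      ≤ ∫ y in Set.Ioi s, s ^ n * exp (-a * y) :=
        setIntegral_mono_on hf hg measurableSet_Ioi hbound
    _ = s ^ n * exp (-a * s) / a := by
        rw [integral_const_mul, integral_exp_neg_mul_Ioi ha, mul_div_assoc]

/-- For `a, b ≥ 1` and integers `k ≤ 1`,
`∫_{√(b/a)}^∞ e^{-ay - b/y} y^{k-1} dy ≤ a^{-k} (ab)^{(k-1)/2} e^{-√(ab)}`. -/
theorem bessel_type_tail_bound (k : ℤ) (hk : k ≤ 1) (a b : ℝ) (ha : 1 ≤ a) (hb : 1 ≤ b) :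
    ∫ y in Set.Ioi (Real.sqrt (b / a)), Real.exp (-a * y - b / y) * y ^ (k - 1) ≤
      a ^ (-k) * (a * b) ^ (((k : ℝ) - 1) / 2) * Real.exp (-Real.sqrt (a * b)) := by
  have ha0 : 0 < a := one_pos.trans_le ha
  have hb0 : 0 < b := one_pos.trans_le hb
  calc _ ≤ √(b / a) ^ (k - 1) * exp (-a * √(b / a)) / a :=
        integral_exp_neg_mul_sub_div_mul_zpow_Ioi_le ha0 hb0.le (by omega)
          (sqrt_pos.mpr (div_pos hb0 ha0))
    _ = _ := by
        rw [sqrt_div_eq_sqrt_mul_div ha0, div_zpow, sqrt_zpow (mul_pos ha0 hb0).le, neg_mul,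
          mul_div_cancel₀ _ ha0.ne', zpow_sub₀ ha0.ne', zpow_one, zpow_neg, Int.cast_sub,
          Int.cast_one]
        field_simp
end

section
/- Let N ≥ 1 be an integer, α, β : Z/NZ → C functions, and t, u ∈ C. Define S^{t,u}_{α,β}(τ) = Σ_{m≥1} Σ_{n≥1} α(m) β(n) m^t n^u e^{2πiτmn/N} for τ in the upper half-plane. Then for s ∈ C with Re(s) sufficiently large, y ↦ S^{t,u}_{α,β}(iy) y^{s-1} is integrable on (0,∞) and ∫_0^∞ S^{t,u}_{α,β}(iy) y^{s-1} dy = (2π/N)^{-s} Γ(s) L(α, s-t) L(β, s-u), where L(α,s) = Σ_{m≥1} α(m) m^{-s}. -/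
set_option autoImplicit false

open Complex MeasureTheory Real

/-- The double series `S^{t,u}_{α,β}(τ) = Σ_{m,n≥1} α(m)β(n) m^t n^u e^{2πiτmn/N}`. -/
noncomputable def doubleEisSeries (N : ℕ) (α β : ZMod N → ℂ) (t u : ℂ) (τ : ℂ) : ℂ :=
  ∑' m : ℕ+, ∑' n : ℕ+, α ((m : ℕ) : ZMod N) * β ((n : ℕ) : ZMod N) *
    ((m : ℕ) : ℂ) ^ t * ((n : ℕ) : ℂ) ^ u *
    Complex.exp (2 * π * I * τ * ((m : ℕ) : ℂ) * ((n : ℕ) : ℂ) / N)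

/-- The Dirichlet series `L(α,s) = Σ_{m≥1} α(m) m^{-s}` of an `N`-periodic function. -/
noncomputable def periodicLSeries (N : ℕ) (α : ZMod N → ℂ) (s : ℂ) : ℂ :=
  ∑' m : ℕ+, α ((m : ℕ) : ZMod N) * ((m : ℕ) : ℂ) ^ (-s)

/-!
For `y > 0` the series `S(iy) = Σ a_{mn} exp(-2π m n y / N)` converges absolutely, and by the
Gamma integral `Σ ∫₀^∞ |a_{mn}| exp(-2π m n y / N) y^{σ-1} dy = Γ(σ) Σ |a_{mn}| (2π m n / N)^{-σ}`,
which is finite as soon as `σ > Re t + 1` and `σ > Re u + 1` because the coefficients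
`a_{mn} = α(m) β(n) m^t n^u` grow polynomially in each variable separately. So the series may be
integrated term by term: this gives integrability, and the value
`Σ Γ(s) a_{mn} (2π m n / N)^{-s}`, which factors into `(2π/N)^{-s} Γ(s) L(α, s-t) L(β, s-u)`.
-/

open Set
open scoped ENNReal

theorem MeasureTheory.integrable_tsum_of_summable_integral_norm {α E ι : Type*} [MeasurableSpace α]
    {μ : Measure α} [NormedAddCommGroup E] [CompleteSpace E] [Countable ι] {F : ι → α → E}
    (hF_int : ∀ i, Integrable (F i) μ) (hF_sum : Summable fun i ↦ ∫ a, ‖F i a‖ ∂μ) :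
    Integrable (fun a ↦ ∑' i, F i a) μ := by
  have hlint : ∑' i, ∫⁻ a, ‖F i a‖ₑ ∂μ ≠ ∞ := by
    simp_rw [← ofReal_integral_norm_eq_lintegral_enorm (hF_int _)]
    rw [← ENNReal.ofReal_tsum_of_nonneg (fun i ↦ integral_nonneg fun _ ↦ norm_nonneg _) hF_sum]
    exact ENNReal.ofReal_ne_top
  have hsum : ∀ᵐ a ∂μ, Summable fun i ↦ ‖F i a‖ :=
    summable_norm_of_tsum_eLpNorm_ne_top le_rfl (fun i ↦ (hF_int i).1)
      (by simpa only [eLpNorm_one_eq_lintegral_enorm] using hlint)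
  refine ⟨aestronglyMeasurable_of_tendsto_ae Filter.atTop
    (fun s ↦ Finset.aestronglyMeasurable_fun_sum s fun i _ ↦ (hF_int i).1)
    (hsum.mono fun a ha ↦ ha.of_norm.hasSum), ?_⟩
  calc ∫⁻ a, ‖∑' i, F i a‖ₑ ∂μ ≤ ∫⁻ a, ∑' i, ‖F i a‖ₑ ∂μ :=
        lintegral_mono fun a ↦ enorm_tsum_le_tsum_enorm
    _ = ∑' i, ∫⁻ a, ‖F i a‖ₑ ∂μ := lintegral_tsum fun i ↦ (hF_int i).1.enorm
    _ < ∞ := hlint.lt_top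

lemma summable_pnat_rpow {x : ℝ} (hx : x < -1) : Summable fun m : ℕ+ ↦ (m : ℝ) ^ x :=
  summable_pnat_iff_summable_nat.2 (Real.summable_nat_rpow.2 hx)

lemma summable_pnat_rpow_mul_exp_neg_mul (x : ℝ) {c : ℝ} (hc : 0 < c) :
    Summable fun m : ℕ+ ↦ (m : ℝ) ^ x * rexp (-c * m) := by
  refine .of_nonneg_of_le (fun m ↦ by positivity) (fun m ↦ ?_)
    (summable_pnat_iff_summable_nat.2 (Real.summable_pow_mul_exp_neg_nat_mul ⌈x⌉₊ hc))
  gcongr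
  calc (m : ℝ) ^ x ≤ (m : ℝ) ^ (⌈x⌉₊ : ℝ) :=
        Real.rpow_le_rpow_of_exponent_le (Nat.one_le_cast.2 m.pos) (Nat.le_ceil x)
    _ = (m : ℝ) ^ ⌈x⌉₊ := Real.rpow_natCast _ _

section Mellin

lemma mellinConvergent_exp_neg_mul {s : ℂ} (hs : 0 < s.re) {p : ℝ} (hp : 0 < p) :
    MellinConvergent (fun t : ℝ ↦ (↑(rexp (-p * t)) : ℂ)) s := by
  have hGamma : MellinConvergent (fun t : ℝ ↦ (↑(rexp (-t)) : ℂ)) s := by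
    simpa only [MellinConvergent, smul_eq_mul, mul_comm] using Complex.GammaIntegral_convergent hs
  simpa only [neg_mul] using (MellinConvergent.comp_mul_left (s := s) hp).2 hGamma

lemma integral_norm_cpow_smul_exp_neg_mul {s : ℂ} (hs : 0 < s.re) {p : ℝ} (hp : 0 < p) (a : ℂ) :
    ∫ t : ℝ in Ioi 0, ‖(t : ℂ) ^ (s - 1) • (a * ↑(rexp (-p * t)))‖ =
      Real.Gamma s.re * (‖a‖ / p ^ s.re) := by
  rw [div_eq_mul_inv, ← Real.inv_rpow hp.le, ← one_div, mul_left_comm, mul_comm (Real.Gamma _),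
    ← Real.integral_rpow_mul_exp_neg_mul_Ioi hs hp, ← integral_const_mul]
  refine setIntegral_congr_fun measurableSet_Ioi fun t (ht : 0 < t) ↦ ?_
  rw [smul_eq_mul, norm_mul, norm_mul, norm_real, Real.norm_of_nonneg (exp_pos _).le,
    norm_cpow_eq_rpow_re_of_pos ht, sub_re, one_re, neg_mul]
  ring

variable {ι : Type*} [Countable ι]

theorem mellinConvergent_of_hasSum {a : ι → ℂ} {p : ι → ℝ} {F : ℝ → ℂ} {s : ℂ}
    (hp : ∀ i, a i = 0 ∨ 0 < p i) (hs : 0 < s.re)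
    (hF : ∀ t ∈ Ioi 0, HasSum (fun i ↦ a i * rexp (-p i * t)) (F t))
    (h_sum : Summable fun i ↦ ‖a i‖ / (p i) ^ s.re) : MellinConvergent F s := by
  have h_int (i : ι) : MellinConvergent (fun t ↦ a i * rexp (-p i * t)) s := by
    rcases hp i with hai | hpi
    · simp [hai, MellinConvergent]
    · exact (mellinConvergent_exp_neg_mul hs hpi).const_smul (a i)
  have h_norm (i : ι) : ∫ t : ℝ in Ioi 0, ‖(t : ℂ) ^ (s - 1) • (a i * rexp (-p i * t))‖ =
      Real.Gamma s.re * (‖a i‖ / p i ^ s.re) := by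
    rcases hp i with hai | hpi
    · simp [hai]
    · exact integral_norm_cpow_smul_exp_neg_mul hs hpi (a i)
  have h_tsum : IntegrableOn (fun t : ℝ ↦ ∑' i, (t : ℂ) ^ (s - 1) • (a i * rexp (-p i * t)))
      (Ioi 0) :=
    integrable_tsum_of_summable_integral_norm h_int (by simpa only [h_norm] using h_sum.mul_left _)
  refine h_tsum.congr_fun (fun t ht ↦ ?_) measurableSet_Ioi
  rw [← (hF t ht).tsum_eq]
  simp only [smul_eq_mul, tsum_mul_left]

end Mellin

section DoubleSeries

variable {f g : ℕ+ → ℂ} {a b C D : ℝ}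

lemma summable_norm_div_rpow (hf : ∀ m, ‖f m‖ ≤ C * (m : ℝ) ^ a) {σ : ℝ} (hσ : a + 1 < σ) :
    Summable fun m : ℕ+ ↦ ‖f m‖ / (m : ℝ) ^ σ := by
  refine .of_nonneg_of_le (fun m ↦ by positivity) (fun m ↦ ?_)
    ((summable_pnat_rpow (x := a - σ) (by linarith)).mul_left C)
  have hm : (0 : ℝ) < m := by exact_mod_cast m.pos
  rw [Real.rpow_sub hm, ← mul_div_assoc]
  gcongr
  exact hf m

lemma summable_mul_mul_exp_neg_mul (hf : ∀ m, ‖f m‖ ≤ C * (m : ℝ) ^ a)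
    (hg : ∀ n, ‖g n‖ ≤ D * (n : ℝ) ^ b) {c : ℝ} (hc : 0 < c) :
    Summable fun i : ℕ+ × ℕ+ ↦ f i.1 * g i.2 * rexp (-(c * i.1 * i.2)) := by
  have hprod := (summable_pnat_rpow_mul_exp_neg_mul a hc).mul_of_nonneg
    (summable_pnat_rpow_mul_exp_neg_mul b hc) (fun m ↦ by positivity) (fun n ↦ by positivity)
  refine .of_norm_bounded (hprod.mul_left (C * D * rexp c)) fun i ↦ ?_
  have hm : (1 : ℝ) ≤ i.1 := Nat.one_le_cast.2 i.1.pos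
  have hn : (1 : ℝ) ≤ i.2 := Nat.one_le_cast.2 i.2.pos
  -- `m n ≥ m + n - 1`, so the double exponential is dominated by a product of single ones
  have hexp : rexp (-(c * i.1 * i.2)) ≤ rexp c * (rexp (-c * i.1) * rexp (-c * i.2)) := by
    rw [← Real.exp_add, ← Real.exp_add, Real.exp_le_exp]
    nlinarith [mul_nonneg (sub_nonneg.2 hm) (sub_nonneg.2 hn)]
  have hfg : ‖f i.1‖ * ‖g i.2‖ ≤ C * (i.1 : ℝ) ^ a * (D * (i.2 : ℝ) ^ b) :=
    mul_le_mul (hf _) (hg _) (norm_nonneg _) ((norm_nonneg _).trans (hf _))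
  rw [norm_mul, norm_mul, norm_real, Real.norm_of_nonneg (exp_pos _).le]
  refine (mul_le_mul hfg hexp (exp_pos _).le
    ((mul_nonneg (norm_nonneg _) (norm_nonneg _)).trans hfg)).trans_eq ?_
  ring

lemma norm_mul_pnat_cpow_neg (z : ℂ) (m : ℕ+) (s : ℂ) :
    ‖z * (m : ℂ) ^ (-s)‖ = ‖z‖ / (m : ℝ) ^ s.re := by
  rw [norm_mul, norm_natCast_cpow_of_pos m.pos, neg_re, Real.rpow_neg (Nat.cast_nonneg _),
    div_eq_mul_inv]

theorem hasMellin_tsum_tsum_mul_exp_neg_mul (hf : ∀ m, ‖f m‖ ≤ C * (m : ℝ) ^ a)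
    (hg : ∀ n, ‖g n‖ ≤ D * (n : ℝ) ^ b) {c : ℝ} (hc : 0 < c) {s : ℂ} (hs : 0 < s.re)
    (ha : a + 1 < s.re) (hb : b + 1 < s.re) :
    HasMellin (fun y : ℝ ↦ ∑' m, ∑' n, f m * g n * rexp (-(c * m * n) * y)) s
      ((c : ℂ) ^ (-s) * Gamma s *
        ((∑' m, f m * (m : ℂ) ^ (-s)) * ∑' n, g n * (n : ℂ) ^ (-s))) := by
  have hp (i : ℕ+ × ℕ+) : f i.1 * g i.2 = 0 ∨ 0 < c * i.1 * i.2 := Or.inr (by positivity)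
  have hF : ∀ y ∈ Ioi 0, HasSum (fun i : ℕ+ × ℕ+ ↦ f i.1 * g i.2 * rexp (-(c * i.1 * i.2) * y))
      (∑' m, ∑' n, f m * g n * rexp (-(c * m * n) * y)) := by
    intro y hy
    have h := summable_mul_mul_exp_neg_mul hf hg (mul_pos hc hy)
    simp only [show ∀ m n : ℝ, -(c * y * m * n) = -(c * m * n) * y by intros; ring] at h
    exact (h.tsum_prod' h.prod_factor) ▸ h.hasSum
  have h_sum : Summable fun i : ℕ+ × ℕ+ ↦ ‖f i.1 * g i.2‖ / (c * i.1 * i.2) ^ s.re := by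
    refine (((summable_norm_div_rpow hf ha).mul_of_nonneg (summable_norm_div_rpow hg hb)
      (fun _ ↦ by positivity) (fun _ ↦ by positivity)).mul_left (c ^ s.re)⁻¹).congr fun i ↦ ?_
    rw [norm_mul, Real.mul_rpow (by positivity) (by positivity),
      Real.mul_rpow hc.le (by positivity)]
    field_simp
  have hLf : Summable fun m : ℕ+ ↦ ‖f m * (m : ℂ) ^ (-s)‖ := by
    simpa only [norm_mul_pnat_cpow_neg] using summable_norm_div_rpow hf ha
  have hLg : Summable fun n : ℕ+ ↦ ‖g n * (n : ℂ) ^ (-s)‖ := by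
    simpa only [norm_mul_pnat_cpow_neg] using summable_norm_div_rpow hg hb
  have h_L : HasSum (fun i : ℕ+ × ℕ+ ↦ f i.1 * (i.1 : ℂ) ^ (-s) * (g i.2 * (i.2 : ℂ) ^ (-s)))
      ((∑' m, f m * (m : ℂ) ^ (-s)) * ∑' n, g n * (n : ℂ) ^ (-s)) := by
    rw [tsum_mul_tsum_of_summable_norm hLf hLg]
    exact (summable_mul_of_summable_norm hLf hLg).hasSum
  refine ⟨mellinConvergent_of_hasSum hp hs hF h_sum,
    (hasSum_mellin hp hs hF h_sum).unique ((h_L.mul_left ((c : ℂ) ^ (-s) * Gamma s)).congr_fun ?_)⟩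
  intro i
  rw [ofReal_mul, mul_cpow_ofReal_nonneg (by positivity) (by positivity), ofReal_mul,
    mul_cpow_ofReal_nonneg hc.le (by positivity), ofReal_natCast, ofReal_natCast]
  simp only [cpow_neg]
  ring

end DoubleSeries

lemma norm_mul_pnat_cpow_le {h : ℕ+ → ℂ} {C : ℝ} (hC : ∀ m, ‖h m‖ ≤ C) (t : ℂ) (m : ℕ+) :
    ‖h m * ((m : ℕ) : ℂ) ^ t‖ ≤ C * (m : ℝ) ^ t.re := by
  rw [norm_mul, norm_natCast_cpow_of_pos m.pos]
  exact mul_le_mul_of_nonneg_right (hC m) (by positivity)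

lemma doubleEisSeries_I_mul (N : ℕ) (α β : ZMod N → ℂ) (t u : ℂ) (y : ℝ) :
    doubleEisSeries N α β t u (I * y) = ∑' m : ℕ+, ∑' n : ℕ+,
      α ((m : ℕ) : ZMod N) * ((m : ℕ) : ℂ) ^ t * (β ((n : ℕ) : ZMod N) * ((n : ℕ) : ℂ) ^ u) *
        rexp (-(2 * π / N * m * n) * y) := by
  refine tsum_congr fun m ↦ tsum_congr fun n ↦ ?_
  have hexp : Complex.exp (2 * π * I * (I * y) * ((m : ℕ) : ℂ) * ((n : ℕ) : ℂ) / N) =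
      rexp (-(2 * π / N * m * n) * y) := by
    rw [ofReal_exp]
    push_cast
    congr 1
    linear_combination (2 * π * y * m * n / N : ℂ) * I_sq
  rw [hexp]
  ring

lemma periodicLSeries_sub (N : ℕ) (α : ZMod N → ℂ) (s t : ℂ) :
    periodicLSeries N α (s - t) =
      ∑' m : ℕ+, α ((m : ℕ) : ZMod N) * ((m : ℕ) : ℂ) ^ t * ((m : ℕ) : ℂ) ^ (-s) := by
  refine tsum_congr fun m ↦ ?_
  rw [mul_assoc, ← cpow_add _ _ (Nat.cast_ne_zero.2 m.ne_zero), neg_sub, sub_eq_add_neg]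

/-- For `Re s` sufficiently large, `y ↦ S^{t,u}_{α,β}(iy) y^{s-1}` is integrable on `(0,∞)` and
`∫_0^∞ S^{t,u}_{α,β}(iy) y^{s-1} dy = (2π/N)^{-s} Γ(s) L(α,s-t) L(β,s-u)`. -/
theorem mellin_doubleEisSeries (N : ℕ) (hN : 1 ≤ N) (α β : ZMod N → ℂ) (t u : ℂ) :
    ∃ A : ℝ, ∀ s : ℂ, A < s.re →
      IntegrableOn (fun y : ℝ =>
          doubleEisSeries N α β t u (I * (y : ℂ)) * (y : ℂ) ^ (s - 1)) (Set.Ioi 0) ∧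
      ∫ y in Set.Ioi (0 : ℝ),
          doubleEisSeries N α β t u (I * (y : ℂ)) * (y : ℂ) ^ (s - 1) =
        ((2 * π / N : ℂ)) ^ (-s) * Complex.Gamma s *
          periodicLSeries N α (s - t) * periodicLSeries N β (s - u) := by
  have : NeZero N := ⟨by omega⟩
  have hN0 : (0 : ℝ) < N := by exact_mod_cast hN
  obtain ⟨Cα, hCα⟩ := Finite.exists_le fun x : ZMod N ↦ ‖α x‖
  obtain ⟨Cβ, hCβ⟩ := Finite.exists_le fun x : ZMod N ↦ ‖β x‖
  refine ⟨|t.re| + |u.re| + 1, fun s hs ↦ ?_⟩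
  obtain ⟨hconv, hval⟩ := hasMellin_tsum_tsum_mul_exp_neg_mul
    (norm_mul_pnat_cpow_le (fun m ↦ hCα _) t) (norm_mul_pnat_cpow_le (fun n ↦ hCβ _) u)
    (div_pos two_pi_pos hN0) (s := s) (by linarith [abs_nonneg t.re, abs_nonneg u.re])
    (by linarith [le_abs_self t.re, abs_nonneg u.re])
    (by linarith [le_abs_self u.re, abs_nonneg t.re])
  have hF : (fun y : ℝ ↦ doubleEisSeries N α β t u (I * y) * (y : ℂ) ^ (s - 1)) =
      fun y : ℝ ↦ (y : ℂ) ^ (s - 1) • ∑' m : ℕ+, ∑' n : ℕ+,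
        α ((m : ℕ) : ZMod N) * ((m : ℕ) : ℂ) ^ t * (β ((n : ℕ) : ZMod N) * ((n : ℕ) : ℂ) ^ u) *
          rexp (-(2 * π / N * m * n) * y) := by
    ext y
    rw [doubleEisSeries_I_mul, smul_eq_mul, mul_comm]
  refine ⟨hF ▸ hconv, ?_⟩
  rw [hF, ← mellin, hval, periodicLSeries_sub, periodicLSeries_sub]
  push_cast
  ring
end

section
/- For τ ∈ C \ R and integers a,b ≥ 0, define φ_{a,b,τ}(x) = Σ_{n∈Z} 1/((τ+n+x)^{a+1} (τ̄+n+x)^{b+1}). Then for τ in the upper half-plane, the zeroth Fourier coefficient of φ_{a,b,τ} is c_0(φ_{a,b,τ}) = ∫_0^1 φ_{a,b,τ}(x) dx = (-1)^b · 2πi · binom(a+b, a) · (τ - τ̄)^{-a-b-1}. -/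
set_option autoImplicit false

open Complex Real

namespace PhiAux

open MeasureTheory Filter Topology Set

noncomputable section

variable {τ : ℂ}

/-- The integrand `x ↦ ((τ+x)^m (τ̄+x)^n)⁻¹` on the real line. -/
def G (τ : ℂ) (m n : ℕ) (x : ℝ) : ℂ := ((τ + x) ^ m * ((starRingEnd ℂ) τ + x) ^ n)⁻¹

lemma add_real_ne_zero (h : τ.im ≠ 0) (x : ℝ) : τ + (x : ℂ) ≠ 0 := by
  intro hx
  apply h
  simpa using congrArg Complex.im hx

lemma abs_conj_add_real (x : ℝ) :
    ‖(starRingEnd ℂ) τ + x‖ = ‖τ + x‖ := by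
  rw [show (starRingEnd ℂ) τ + (x : ℂ) = (starRingEnd ℂ) (τ + x) by
    simp [map_add, Complex.conj_ofReal], Complex.norm_conj]

lemma im_le_abs_add_real (h : 0 < τ.im) (x : ℝ) : τ.im ≤ ‖τ + x‖ := by
  have h1 : |(τ + x).im| ≤ ‖τ + x‖ := Complex.abs_im_le_norm _
  have h2 : (τ + (x : ℂ)).im = τ.im := by simp
  rw [h2] at h1
  exact (le_abs_self _).trans h1

lemma norm_G (m n : ℕ) (x : ℝ) :
    ‖G τ m n x‖ = (‖τ + x‖ ^ (m + n))⁻¹ := by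
  simp only [G, norm_inv, norm_mul, norm_pow, abs_conj_add_real,
    pow_add]

lemma continuous_G (h : τ.im ≠ 0) (m n : ℕ) : Continuous (G τ m n) := by
  apply Continuous.inv₀
  · fun_prop
  · intro x
    apply mul_ne_zero <;> apply pow_ne_zero
    · exact add_real_ne_zero h x
    · refine add_real_ne_zero ?_ x
      simpa using h

lemma integrable_aux (u : ℝ) {v : ℝ} (hv : v ≠ 0) :
    Integrable (fun x : ℝ => ((x + u) ^ 2 + v ^ 2)⁻¹) := by
  have h1 : Integrable (fun y : ℝ => (v ^ 2)⁻¹ * (1 + (y / v) ^ 2)⁻¹) :=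
    ((integrable_inv_one_add_sq.comp_div hv).const_mul _)
  have h2 : Integrable (fun x : ℝ => (v ^ 2)⁻¹ * (1 + ((x + u) / v) ^ 2)⁻¹) :=
    h1.comp_add_right u
  refine h2.congr (Eventually.of_forall fun x => ?_)
  simp only
  rw [show ((x + u) ^ 2 + v ^ 2) = v ^ 2 * (1 + ((x + u) / v) ^ 2) by field_simp; ring, mul_inv]

lemma integrable_G (h : 0 < τ.im) {m n : ℕ} (hmn : 2 ≤ m + n) : Integrable (G τ m n) := by
  have hv : τ.im ≠ 0 := h.ne'
  refine Integrable.mono'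
    (g := fun x => (τ.im ^ (m + n - 2))⁻¹ * ((x + τ.re) ^ 2 + τ.im ^ 2)⁻¹)
    ((integrable_aux τ.re hv).const_mul _) ((continuous_G hv m n).aestronglyMeasurable)
    (Eventually.of_forall fun x => ?_)
  rw [norm_G]
  have habs : τ.im ≤ ‖τ + x‖ := im_le_abs_add_real h x
  have habs2 : ‖τ + x‖ ^ 2 = (x + τ.re) ^ 2 + τ.im ^ 2 := by
    rw [Complex.sq_norm, Complex.normSq_apply]
    simp
    ring
  have hpos : (0:ℝ) < (x + τ.re) ^ 2 + τ.im ^ 2 := by positivity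
  have key : τ.im ^ (m + n - 2) * ((x + τ.re) ^ 2 + τ.im ^ 2) ≤ ‖τ + x‖ ^ (m + n) := by
    calc τ.im ^ (m + n - 2) * ((x + τ.re) ^ 2 + τ.im ^ 2)
        ≤ ‖τ + x‖ ^ (m + n - 2) * (‖τ + x‖ ^ 2) := by
          rw [← habs2]
          exact mul_le_mul_of_nonneg_right (pow_le_pow_left₀ h.le habs _) (by positivity)
      _ = ‖τ + x‖ ^ (m + n) := by
          rw [← pow_add, Nat.sub_add_cancel hmn]
  calc (‖τ + x‖ ^ (m + n))⁻¹
      ≤ (τ.im ^ (m + n - 2) * ((x + τ.re) ^ 2 + τ.im ^ 2))⁻¹ := by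
        apply inv_anti₀ (by positivity) key
    _ = (τ.im ^ (m + n - 2))⁻¹ * ((x + τ.re) ^ 2 + τ.im ^ 2)⁻¹ := by rw [mul_inv]

lemma tendsto_inv_add {l : Filter ℝ} (hl : Tendsto (fun x : ℝ => |x|) l atTop) :
    Tendsto (fun x : ℝ => (τ + x)⁻¹) l (𝓝 0) := by
  refine squeeze_zero_norm' (a := fun x : ℝ => (|x| - ‖τ‖)⁻¹) ?_ ?_
  · filter_upwards [hl.eventually_ge_atTop (‖τ‖ + 1)] with x hx
    have h1 : ‖(x : ℂ)‖ ≤ ‖τ + x‖ + ‖τ‖ := by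
      have := norm_add_le (τ + x) (-τ)
      simpa using this
    rw [Complex.norm_real, Real.norm_eq_abs] at h1
    have h2 : |x| - ‖τ‖ ≤ ‖τ + x‖ := by linarith
    rw [norm_inv]
    exact inv_anti₀ (by linarith) h2
  · exact tendsto_inv_atTop_zero.comp (tendsto_atTop_add_const_right _ _ hl)

lemma tendsto_pow_inv_add {l : Filter ℝ} (hl : Tendsto (fun x : ℝ => |x|) l atTop) (k : ℕ) :
    Tendsto (fun x : ℝ => ((τ + x) ^ (k + 1))⁻¹) l (𝓝 0) := by
  simp_rw [← inv_pow]
  have := (tendsto_inv_add (τ := τ) hl).pow (k + 1)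
  simpa using this

lemma integrable_pow_inv (h : τ.im ≠ 0) {m : ℕ} (hm : 2 ≤ m) :
    Integrable fun x : ℝ => ((τ + x) ^ m)⁻¹ := by
  rcases h.lt_or_gt with hneg | hpos
  · have h2 : (0:ℝ) < ((starRingEnd ℂ) τ).im := by simpa using hneg
    refine (integrable_G h2 (m := 0) (n := m) (by omega)).congr
      (Eventually.of_forall fun x => ?_)
    simp [G, Complex.conj_conj]
  · refine (integrable_G hpos (m := m) (n := 0) (by omega)).congr
      (Eventually.of_forall fun x => ?_)
    simp [G]

lemma integral_pow_inv_eq_zero (h : τ.im ≠ 0) (k : ℕ) :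
    ∫ x : ℝ, ((τ + x) ^ (k + 2))⁻¹ = 0 := by
  have hderiv : ∀ x : ℝ,
      HasDerivAt (fun x : ℝ => (-(k + 1) : ℂ)⁻¹ * ((τ + x) ^ (k + 1))⁻¹)
        (((τ + x) ^ (k + 2))⁻¹) x := by
    intro x
    have hne : τ + (x : ℂ) ≠ 0 := add_real_ne_zero h x
    have h0 : HasDerivAt (fun z : ℂ => τ + z) 1 (x : ℂ) := (hasDerivAt_id _).const_add τ
    have h1 := h0.pow (k + 1)
    have h2 := h1.inv (pow_ne_zero _ hne)
    have h3 := (h2.comp_ofReal).const_mul ((-((k : ℂ) + 1))⁻¹)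
    refine h3.congr_deriv ?_
    have hk : ((k : ℂ) + 1) ≠ 0 := Nat.cast_add_one_ne_zero k
    set w := τ + (x : ℂ) with hw
    have e0 : (↑(k + 1) : ℂ) = (k : ℂ) + 1 := by push_cast; ring
    have e1 : (w ^ (k + 1)) ^ 2 = w ^ k * w ^ (k + 2) := by
      rw [← pow_mul, ← pow_add]; congr 1; ring
    simp only [Pi.pow_apply, Nat.add_sub_cancel]
    beta_reduce
    rw [← hw]
    rw [e0, e1, mul_one]
    have hB : ((-1 : ℂ) + -↑k) * (w ^ k * w ^ (k + 2)) ≠ 0 :=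
      mul_ne_zero (by intro hc; apply hk; linear_combination -hc)
        (mul_ne_zero (pow_ne_zero _ hne) (pow_ne_zero _ hne))
    field_simp
  have hint : Integrable (fun x : ℝ => ((τ + x) ^ (k + 2))⁻¹) :=
    integrable_pow_inv h (by omega)
  have := integral_of_hasDerivAt_of_tendsto hderiv hint
    (((tendsto_pow_inv_add (τ := τ) tendsto_abs_atBot_atTop k).const_mul _))
    (((tendsto_pow_inv_add (τ := τ) tendsto_abs_atTop_atTop k).const_mul _))
  simpa using this

lemma integral_sq_add_sq (u : ℝ) {v : ℝ} (hv : 0 < v) :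
    ∫ x : ℝ, ((x + u) ^ 2 + v ^ 2)⁻¹ = Real.pi / v := by
  have h1 : ∀ x : ℝ, ((x + u) ^ 2 + v ^ 2)⁻¹ = (v ^ 2)⁻¹ * (1 + ((x + u) / v) ^ 2)⁻¹ := by
    intro x
    rw [show ((x + u) ^ 2 + v ^ 2) = v ^ 2 * (1 + ((x + u) / v) ^ 2) by
      field_simp; ring, mul_inv]
  calc ∫ x : ℝ, ((x + u) ^ 2 + v ^ 2)⁻¹
      = ∫ x : ℝ, (v ^ 2)⁻¹ * (1 + ((x + u) / v) ^ 2)⁻¹ := by simp_rw [h1]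
    _ = (v ^ 2)⁻¹ * ∫ x : ℝ, (1 + ((x + u) / v) ^ 2)⁻¹ := integral_const_mul _ _
    _ = (v ^ 2)⁻¹ * ∫ x : ℝ, (1 + (x / v) ^ 2)⁻¹ := by
        rw [integral_add_right_eq_self (fun y : ℝ => (1 + (y / v) ^ 2)⁻¹) u]
    _ = (v ^ 2)⁻¹ * (|v| • ∫ x : ℝ, (1 + x ^ 2)⁻¹) := by
        rw [MeasureTheory.Measure.integral_comp_div (fun y : ℝ => (1 + y ^ 2)⁻¹) v]
    _ = Real.pi / v := by
        rw [integral_univ_inv_one_add_sq, abs_of_pos hv, smul_eq_mul]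
        field_simp

lemma base (h : 0 < τ.im) :
    ∫ x : ℝ, G τ 1 1 x = 2 * Real.pi * I * (τ - (starRingEnd ℂ) τ)⁻¹ := by
  have e : ∀ x : ℝ, G τ 1 1 x = ((((x + τ.re) ^ 2 + τ.im ^ 2)⁻¹ : ℝ) : ℂ) := by
    intro x
    have h1 : (starRingEnd ℂ) τ + (x : ℂ) = (starRingEnd ℂ) (τ + x) := by
      simp [map_add, Complex.conj_ofReal]
    rw [G, pow_one, pow_one, h1, Complex.mul_conj]
    rw [show Complex.normSq (τ + x) = (x + τ.re) ^ 2 + τ.im ^ 2 by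
      rw [Complex.normSq_apply]; simp; ring]
    simp
  simp_rw [e]
  rw [show ∫ x : ℝ, ((((x + τ.re) ^ 2 + τ.im ^ 2)⁻¹ : ℝ) : ℂ) =
      ((∫ x : ℝ, ((x + τ.re) ^ 2 + τ.im ^ 2)⁻¹ : ℝ) : ℂ) from
    integral_ofReal, integral_sq_add_sq τ.re h]
  have hτd : τ - (starRingEnd ℂ) τ = (2 * τ.im : ℝ) * I := by
    simp [Complex.ext_iff]
    ring
  rw [hτd]
  have hv : (τ.im : ℂ) ≠ 0 := by exact_mod_cast h.ne'
  push_cast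
  field_simp

lemma sub_conj_ne_zero (h : 0 < τ.im) : τ - (starRingEnd ℂ) τ ≠ 0 := by
  intro hc
  have h2 := congrArg Complex.im hc
  simp at h2
  exact absurd h2 h.ne'

lemma integral_G_zero_left (h : 0 < τ.im) (k : ℕ) : ∫ x : ℝ, G τ 0 (k + 2) x = 0 := by
  have hc : ((starRingEnd ℂ) τ).im ≠ 0 := by simp [h.ne']
  rw [← integral_pow_inv_eq_zero hc k]
  apply integral_congr_ae
  filter_upwards with x
  simp [G]

lemma integral_G_zero_right (h : 0 < τ.im) (k : ℕ) : ∫ x : ℝ, G τ (k + 2) 0 x = 0 := by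
  rw [← integral_pow_inv_eq_zero h.ne' k]
  apply integral_congr_ae
  filter_upwards with x
  simp [G]

lemma rec_step (h : 0 < τ.im) (m n : ℕ) (hmn : 1 ≤ m + n) :
    ∫ x : ℝ, G τ (m + 1) (n + 1) x
      = (τ - (starRingEnd ℂ) τ)⁻¹ *
        ((∫ x : ℝ, G τ m (n + 1) x) - ∫ x : ℝ, G τ (m + 1) n x) := by
  have hd : τ - (starRingEnd ℂ) τ ≠ 0 := sub_conj_ne_zero h
  have hpt : ∀ x : ℝ, G τ (m + 1) (n + 1) x
      = (τ - (starRingEnd ℂ) τ)⁻¹ * (G τ m (n + 1) x - G τ (m + 1) n x) := by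
    intro x
    have hA : τ + (x : ℂ) ≠ 0 := add_real_ne_zero h.ne' x
    have hB : (starRingEnd ℂ) τ + (x : ℂ) ≠ 0 := by
      refine add_real_ne_zero ?_ x
      simp [h.ne']
    have hd2 : (τ + (x : ℂ)) - ((starRingEnd ℂ) τ + (x : ℂ)) ≠ 0 := by
      intro hc; apply hd; rw [← hc]; ring
    simp only [G]
    have key : ((τ + (x:ℂ)) ^ m * ((starRingEnd ℂ) τ + (x:ℂ)) ^ (n + 1))⁻¹
        - ((τ + (x:ℂ)) ^ (m + 1) * ((starRingEnd ℂ) τ + (x:ℂ)) ^ n)⁻¹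
        = ((τ + (x:ℂ)) - ((starRingEnd ℂ) τ + (x:ℂ)))
          * ((τ + (x:ℂ)) ^ (m + 1) * ((starRingEnd ℂ) τ + (x:ℂ)) ^ (n + 1))⁻¹ := by
      have key' : ∀ p q A B : ℂ, p ≠ 0 → q ≠ 0 → A ≠ 0 → B ≠ 0 →
          (p * (q * B))⁻¹ - (p * A * q)⁻¹ = (A - B) * (p * A * (q * B))⁻¹ := by
        intro p q A B hp hq hA' hB'
        field_simp
      rw [pow_succ, pow_succ]
      exact key' _ _ _ _ (pow_ne_zero _ hA) (pow_ne_zero _ hB) hA hB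
    rw [key, show τ - (starRingEnd ℂ) τ = (τ + (x:ℂ)) - ((starRingEnd ℂ) τ + (x:ℂ)) by ring,
      ← mul_assoc, inv_mul_cancel₀ hd2, one_mul]
  simp_rw [hpt]
  rw [integral_const_mul,
    integral_sub (integrable_G h (by omega)) (integrable_G h (by omega))]

lemma main_formula (h : 0 < τ.im) :
    ∀ t a b : ℕ, a + b = t →
    ∫ x : ℝ, G τ (a + 1) (b + 1) x
      = (-1 : ℂ) ^ b * (2 * Real.pi * I) * ((a + b).choose a : ℂ) *
        ((τ - (starRingEnd ℂ) τ)⁻¹) ^ (a + b + 1) := by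
  intro t
  induction t with
  | zero =>
    intro a b hab
    obtain ⟨rfl, rfl⟩ : a = 0 ∧ b = 0 := by omega
    simpa using base h
  | succ t ih =>
    intro a b hab
    rw [rec_step h a b (by omega)]
    match a, b with
    | 0, 0 => omega
    | 0, b' + 1 =>
      have h1 := ih 0 b' (by omega)
      simp only [Nat.zero_add, zero_add, Nat.choose_zero_right, Nat.cast_one] at h1 ⊢
      rw [integral_G_zero_left h b', h1]
      ring
    | a' + 1, 0 =>
      have h2 := ih a' 0 (by omega)
      simp only [Nat.add_zero, add_zero, Nat.choose_self, Nat.cast_one] at h2 ⊢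
      rw [integral_G_zero_right h a', h2]
      ring
    | a' + 1, b' + 1 =>
      rw [ih a' (b' + 1) (by omega), ih (a' + 1) b' (by omega)]
      have hc : ((a' + 1 + (b' + 1)).choose (a' + 1) : ℂ)
          = ((a' + (b' + 1)).choose a' : ℂ) + ((a' + 1 + b').choose (a' + 1) : ℂ) := by
        rw [show a' + 1 + (b' + 1) = (a' + b' + 1) + 1 by ring,
          show a' + (b' + 1) = a' + b' + 1 by ring,
          show a' + 1 + b' = a' + b' + 1 by ring,
          Nat.choose_succ_succ]
        push_cast
        ring
      rw [hc]
      ring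

lemma lintegral_translate (F : ℝ → ENNReal) (n : ℤ) :
    ∫⁻ x in Ioc (0 : ℝ) 1, F (x + n) = ∫⁻ x in Ioc ((n : ℝ)) ((n : ℝ) + 1), F x := by
  have h := (measurePreserving_add_right volume (n : ℝ)).setLIntegral_comp_emb
    (measurableEmbedding_addRight (n : ℝ)) F (Ioc (0 : ℝ) 1)
  rw [h, image_add_const_Ioc]
  rw [zero_add, add_comm (1 : ℝ) (n : ℝ)]

lemma unfold (h : 0 < τ.im) {m n : ℕ} (hmn : 2 ≤ m + n) :
    ∫ x in (0 : ℝ)..1, ∑' k : ℤ, G τ m n (x + k) = ∫ x : ℝ, G τ m n x := by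
  have hcont := continuous_G h.ne' m n
  have hint := integrable_G h hmn
  have key : ∑' k : ℤ, ∫⁻ x in Ioc (0 : ℝ) 1, ‖G τ m n (x + k)‖₊ ≠ ⊤ := by
    have e1 : ∀ k : ℤ, ∫⁻ x in Ioc (0 : ℝ) 1, (‖G τ m n (x + k)‖₊ : ENNReal)
        = ∫⁻ x in Ioc ((k : ℝ)) ((k : ℝ) + 1), (‖G τ m n x‖₊ : ENNReal) := fun k =>
      lintegral_translate (fun y => (‖G τ m n y‖₊ : ENNReal)) k
    simp_rw [e1]
    have e2 : (⋃ k : ℤ, Ioc ((k : ℝ)) ((k : ℝ) + 1)) = univ := by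
      simpa using iUnion_Ioc_add_intCast (0 : ℝ)
    have e4 := lintegral_iUnion (μ := (volume : Measure ℝ))
      (s := fun k : ℤ => Ioc ((k : ℝ)) ((k : ℝ) + 1)) (fun _ => measurableSet_Ioc)
      (by simpa using pairwise_disjoint_Ioc_add_intCast (0 : ℝ))
      (fun y => (‖G τ m n y‖₊ : ENNReal))
    rw [e2, Measure.restrict_univ] at e4
    rw [← e4]
    exact hint.2.ne
  rw [intervalIntegral.integral_of_le zero_le_one]
  rw [integral_tsum (f := fun (k : ℤ) (x : ℝ) => G τ m n (x + k))
    (fun k => (hcont.comp (continuous_add_right ((k : ℤ) : ℝ))).aestronglyMeasurable) key]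
  have e3 : ∀ k : ℤ, ∫ x in Ioc (0 : ℝ) 1, G τ m n (x + k)
      = ∫ x in (0 : ℝ)..1, G τ m n (x + k) := fun k =>
    (intervalIntegral.integral_of_le zero_le_one).symm
  simp_rw [e3]
  exact hint.hasSum_intervalIntegral_comp_add_int.tsum_eq

end

end PhiAux

/-- For `τ` in the upper half-plane and `a, b ≥ 0`, the zeroth Fourier coefficient of
`φ_{a,b,τ}(x) = Σ_{n∈ℤ} (τ+n+x)^{-(a+1)} (τ̄+n+x)^{-(b+1)}` is
`∫_0^1 φ_{a,b,τ}(x) dx = (-1)^b · 2πi · C(a+b,a) · (τ-τ̄)^{-a-b-1}`. -/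
theorem fourier_coeff_zero_phi (τ : ℂ) (hτ : 0 < τ.im) (a b : ℕ) :
    ∫ x in (0 : ℝ)..1,
        ∑' n : ℤ, 1 / ((τ + n + x) ^ (a + 1) * ((starRingEnd ℂ) τ + n + x) ^ (b + 1)) =
      (-1 : ℂ) ^ b * (2 * π * I) * ((a + b).choose a : ℂ) *
        (τ - (starRingEnd ℂ) τ) ^ (-(a : ℤ) - b - 1) := by
  have hsum : ∀ (x : ℝ) (n : ℤ),
      (1 : ℂ) / ((τ + n + x) ^ (a + 1) * ((starRingEnd ℂ) τ + n + x) ^ (b + 1))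
        = PhiAux.G τ (a + 1) (b + 1) (x + n) := by
    intro x n
    rw [one_div, PhiAux.G,
      show ((x + (n : ℝ) : ℝ) : ℂ) = (n : ℂ) + (x : ℂ) by push_cast; ring,
      ← add_assoc, ← add_assoc]
  simp_rw [hsum]
  rw [PhiAux.unfold hτ (by omega), PhiAux.main_formula hτ (a + b) a b rfl]
  have hz : (τ - (starRingEnd ℂ) τ) ^ (-(a : ℤ) - b - 1)
      = ((τ - (starRingEnd ℂ) τ)⁻¹) ^ (a + b + 1) := by
    rw [show -(a : ℤ) - b - 1 = -((a + b + 1 : ℕ) : ℤ) by push_cast; ring,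
      zpow_neg, zpow_natCast, inv_pow]
  rw [hz]
end

section
/- For every x ∈ R/Z and every s with 0 < Re(s) < 1 (or by analytic continuation, all s where both sides are defined), the Hurwitz formula holds: ζ(x, 1-s) = Γ(s)/(2π)^s · (e^{-iπs/2} ζ̂(x,s) + e^{iπs/2} ζ̂(-x,s)). -/
open Complex Real HurwitzZeta

lemma Complex.ne_neg_natCast_of_re_pos {s : ℂ} (hs : 0 < s.re) (n : ℕ) : s ≠ -n := by
  rintro rfl
  simp only [neg_re, natCast_re, Left.neg_pos_iff] at hs
  exact (Nat.cast_nonneg n).not_gt hs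

/-- Hurwitz's formula: for `x ∈ ℝ/ℤ` and `0 < Re s < 1`,
`ζ(x, 1-s) = Γ(s)/(2π)^s (e^{-iπs/2} ζ̂(x,s) + e^{iπs/2} ζ̂(-x,s))`. -/
theorem hurwitz_formula (x : ℝ) (s : ℂ) (hs0 : 0 < s.re) (hs1 : s.re < 1) :
    hurwitzZeta (x : UnitAddCircle) (1 - s) =
      Complex.Gamma s / (2 * (π : ℂ)) ^ s *
        (Complex.exp (-I * π * s / 2) * expZeta (x : UnitAddCircle) s +
          Complex.exp (I * π * s / 2) * expZeta ((-x : ℝ) : UnitAddCircle) s) := by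
  have hs_ne_one : s ≠ 1 := by
    rintro rfl
    simp at hs1
  rw [hurwitzZeta_one_sub _ (ne_neg_natCast_of_re_pos hs0) (Or.inr hs_ne_one),
    QuotientAddGroup.mk_neg, cpow_neg]
  ring_nf
end
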